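/- Let u_k : (0,3) → ℝ² be defined by u_k(x) = λ(x)·(1, 1/k) where λ(x) = 0 on (0,1], λ(x) = 1 on (1,2], λ(x) = k on (2,3). Then ∫_0^3 dist(u_k, ℤ²) dx ≤ 1/k, but for every one-dimensional integer-valued function u* of the form u*(x) = a* λ*(x) + b* with a*, b* ∈ ℤ², λ* : ℝ → ℤ, one has ‖u_k − u*‖_{L¹((0,3))} ≥ 1/2. -/

import Mathlib

/-!
On `(0,1]`, `(1,2]` and `(2,3)` the function `u_k` equals, or lies within `1/k` of, the lattice
points `(0,0)`, `(1,0)` and `(k,1)`; this gives the upper bound. These three points are not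
collinear, so an integer line `t ↦ t a + b` misses one of them, and on the corresponding unit
interval `u*` stays at distance at least `1 - 1/k ≥ 1/2` from `u_k`.
-/

open MeasureTheory

noncomputable section

/-- Euclidean norm of a vector given as a function. -/
def enorm' {N : ℕ} (v : Fin N → ℝ) : ℝ := Real.sqrt (∑ i, (v i) ^ 2)

/-- Euclidean distance of a vector to the integer lattice `ℤᴺ`. -/
def distZ {N : ℕ} (v : Fin N → ℝ) : ℝ :=
  ⨅ z : Fin N → ℤ, enorm' (fun i => v i - (z i : ℝ))

/-- The scalar profile `λ` of the counterexample: `0` on `(0,1]`, `1` on `(1,2]`, `k` on `(2,3)`. -/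
def lamfun (k : ℕ) (x : ℝ) : ℝ := if x ≤ 1 then 0 else if x ≤ 2 then 1 else (k : ℝ)

/-- The counterexample `u_k(x) = λ(x)·(1, 1/k)`. -/
def uk (k : ℕ) (x : ℝ) : Fin 2 → ℝ :=
  fun i => lamfun k x * (if i = 0 then 1 else ((k : ℝ))⁻¹)

open Set

section LatticeDistance

variable {N : ℕ}

lemma enorm'_nonneg (v : Fin N → ℝ) : 0 ≤ enorm' v := Real.sqrt_nonneg _

lemma abs_le_enorm' (v : Fin N → ℝ) (i : Fin N) : |v i| ≤ enorm' v := by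
  rw [enorm', ← Real.sqrt_sq_eq_abs]
  exact Real.sqrt_le_sqrt <| Finset.single_le_sum (f := fun j => v j ^ 2)
    (fun j _ => sq_nonneg _) (Finset.mem_univ i)

lemma enorm'_le_sum_abs (v : Fin N → ℝ) : enorm' v ≤ ∑ i, |v i| := by
  refine Real.sqrt_le_iff.mpr ⟨Finset.sum_nonneg fun i _ => abs_nonneg _, ?_⟩
  simpa only [sq_abs] using
    Finset.sum_sq_le_sq_sum_of_nonneg (s := Finset.univ) fun i _ => abs_nonneg (v i)

lemma enorm'_eq_abs_of_forall_ne (v : Fin N → ℝ) (j : Fin N) (h : ∀ i ≠ j, v i = 0) :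
    enorm' v = |v j| := by
  rw [enorm', Finset.sum_eq_single j (fun i _ hi => by simp [h i hi]) (by simp),
    Real.sqrt_sq_eq_abs]

lemma continuous_enorm' : Continuous (enorm' : (Fin N → ℝ) → ℝ) :=
  Real.continuous_sqrt.comp <| continuous_finsetSum _ fun i _ => (continuous_apply i).pow 2

lemma distZ_nonneg (v : Fin N → ℝ) : 0 ≤ distZ v :=
  Real.iInf_nonneg fun _ => enorm'_nonneg _

lemma distZ_le_enorm' (v : Fin N → ℝ) (z : Fin N → ℤ) :
    distZ v ≤ enorm' (fun i => v i - z i) :=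
  ciInf_le ⟨0, by rintro y ⟨z, rfl⟩; exact enorm'_nonneg _⟩ z

lemma distZ_le_abs_sub (v : Fin N → ℝ) (z : Fin N → ℤ) (j : Fin N) (h : ∀ i ≠ j, v i = z i) :
    distZ v ≤ |v j - z j| :=
  (distZ_le_enorm' v z).trans_eq <|
    enorm'_eq_abs_of_forall_ne _ j fun i hi => sub_eq_zero.mpr (h i hi)

lemma one_sub_le_enorm'_sub {u : Fin N → ℝ} {p z : Fin N → ℤ} {ε : ℝ} (hzp : z ≠ p)
    (hu : ∀ i, |u i - p i| ≤ ε) : 1 - ε ≤ enorm' (fun i => u i - z i) := by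
  obtain ⟨i, hi⟩ := Function.ne_iff.mp hzp
  have hpz : (1 : ℝ) ≤ |(p i : ℝ) - z i| := by
    exact_mod_cast Int.one_le_abs (sub_ne_zero.mpr (Ne.symm hi))
  have hzu : (1 : ℝ) - ε ≤ |u i - z i| := by
    linarith [abs_sub_le (p i : ℝ) (u i) (z i), abs_sub_comm (u i) (p i), hu i]
  exact hzu.trans (abs_le_enorm' (fun i => u i - z i) i)

lemma integrableOn_enorm' {α : Type*} [MeasurableSpace α] {μ : Measure α} {s : Set α}
    (hs : μ s ≠ ⊤) {f : α → Fin N → ℝ} (hf : Measurable f)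
    (hbdd : ∀ i, ∃ C, ∀ x, |f x i| ≤ C) : IntegrableOn (fun x => enorm' (f x)) s μ := by
  choose C hC using hbdd
  refine Measure.integrableOn_of_bounded hs
    (continuous_enorm'.measurable.comp hf).aestronglyMeasurable (M := ∑ i, C i) (ae_of_all _ ?_)
  intro x
  rw [Real.norm_of_nonneg (enorm'_nonneg _)]
  exact (enorm'_le_sum_abs _).trans (Finset.sum_le_sum fun i _ => hC i x)

lemma one_sub_mul_measureReal_le_setIntegral {α : Type*} [MeasurableSpace α] {μ : Measure α}
    {s I : Set α} {u : α → Fin N → ℝ} {z : α → Fin N → ℤ} {p : Fin N → ℤ} {ε : ℝ}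
    (hint : IntegrableOn (fun x => enorm' (fun i => u x i - z x i)) s μ)
    (hI : MeasurableSet I) (hIs : I ⊆ s) (hs : μ s ≠ ⊤) (hz : ∀ x, z x ≠ p)
    (hu : ∀ x ∈ I, ∀ i, |u x i - p i| ≤ ε) :
    (1 - ε) * μ.real I ≤ ∫ x in s, enorm' (fun i => u x i - z x i) ∂μ :=
  (setIntegral_ge_of_const_le_real hI (ne_top_of_le_ne_top hs (measure_mono hIs))
      (fun x hx => one_sub_le_enorm'_sub (hz x) (hu x hx)) (hint.mono_set hIs)).trans
    (setIntegral_mono_set hint (ae_of_all _ fun _ => enorm'_nonneg _) hIs.eventuallyLE)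

end LatticeDistance

lemma line_misses_zero_or_one_zero_or_k_one (k : ℕ) (a b : Fin 2 → ℤ) :
    (∀ t : ℤ, (fun i => t * a i + b i) ≠ 0) ∨ (∀ t : ℤ, (fun i => t * a i + b i) ≠ ![1, 0]) ∨
      ∀ t : ℤ, (fun i => t * a i + b i) ≠ ![(k : ℤ), 1] := by
  by_contra! h
  obtain ⟨⟨t₀, h₀⟩, ⟨t₁, h₁⟩, ⟨t₂, h₂⟩⟩ := h
  have e₀ := congrFun h₀ 0
  have e₀' := congrFun h₀ 1
  have e₁ := congrFun h₁ 0
  have e₁' := congrFun h₁ 1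
  have e₂' := congrFun h₂ 1
  simp only [Pi.zero_apply, Matrix.cons_val_zero, Matrix.cons_val_one] at e₀ e₀' e₁ e₁' e₂'
  have ht : (t₁ - t₀) * a 1 = 0 := by linear_combination e₁' - e₀'
  rcases mul_eq_zero.mp ht with ht | ha
  · have : (t₁ - t₀) * a 0 = 1 := by linear_combination e₁ - e₀
    simp [ht] at this
  · simp only [ha, mul_zero, zero_add] at e₀' e₂'
    omega

section Profile

variable {k : ℕ} {x : ℝ}

lemma uk_of_le_one (hx : x ≤ 1) : uk k x = 0 := by
  ext i; simp [uk, lamfun, hx]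

lemma uk_of_mem_Ioc (hx : x ∈ Ioc 1 2) : uk k x = ![1, (k : ℝ)⁻¹] := by
  ext i; fin_cases i <;> simp [uk, lamfun, not_le.mpr hx.1, hx.2]

lemma uk_of_two_lt (hk : k ≠ 0) (hx : 2 < x) : uk k x = ![(k : ℝ), 1] := by
  ext i; fin_cases i <;> simp [uk, lamfun, not_le.mpr hx, (one_lt_two.trans hx).not_ge, hk]

lemma measurable_uk (k : ℕ) : Measurable (uk k) := by
  refine measurable_pi_lambda _ fun i => Measurable.mul_const ?_ _
  exact Measurable.ite measurableSet_Iic measurable_const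
    (Measurable.ite measurableSet_Iic measurable_const measurable_const)

lemma abs_uk_le (hk : 1 ≤ k) (i : Fin 2) : |uk k x i| ≤ k := by
  have hk' : (1 : ℝ) ≤ k := by exact_mod_cast hk
  rcases le_or_gt x 1 with h₁ | h₁
  · simp [uk_of_le_one h₁]
  rcases le_or_gt x 2 with h₂ | h₂
  · rw [uk_of_mem_Ioc ⟨h₁, h₂⟩]
    fin_cases i
    · simpa using hk'
    · simpa [abs_of_nonneg] using (inv_le_one_of_one_le₀ hk').trans hk'
  · rw [uk_of_two_lt (by omega) h₂]
    fin_cases i <;> simp [hk']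

lemma distZ_uk_le (hk : k ≠ 0) (x : ℝ) :
    distZ (uk k x) ≤ (Ioc 1 2).indicator (fun _ => (k : ℝ)⁻¹) x := by
  rcases le_or_gt x 1 with h₁ | h₁
  · rw [indicator_of_notMem fun h => h₁.not_gt h.1, uk_of_le_one h₁]
    simpa using distZ_le_abs_sub (0 : Fin 2 → ℝ) 0 0 (by simp)
  rcases le_or_gt x 2 with h₂ | h₂
  · have hx : x ∈ Ioc 1 2 := ⟨h₁, h₂⟩
    rw [indicator_of_mem hx, uk_of_mem_Ioc hx]
    simpa using distZ_le_abs_sub ![1, (k : ℝ)⁻¹] ![1, 0] 1 fun i hi => by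
      fin_cases i
      · simp
      · exact absurd rfl hi
  · rw [indicator_of_notMem fun h => h₂.not_ge h.2, uk_of_two_lt hk h₂]
    simpa using distZ_le_abs_sub ![(k : ℝ), 1] ![(k : ℤ), 1] 0 fun i hi => by
      fin_cases i
      · exact absurd rfl hi
      · simp

lemma integrableOn_enorm'_uk_sub (hk : 1 ≤ k) {s : Set ℝ} (hs : volume s ≠ ⊤) (a b : Fin 2 → ℤ)
    {lam : ℝ → ℤ} (hlam : Measurable lam) {C : ℝ} (hC : ∀ x, |(lam x : ℝ)| ≤ C) :
    IntegrableOn (fun x => enorm' (fun i => uk k x i - ((lam x * a i + b i : ℤ) : ℝ))) s := by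
  refine integrableOn_enorm' hs (measurable_pi_lambda _ fun i =>
    ((measurable_pi_apply i).comp (measurable_uk k)).sub
      ((measurable_of_countable fun n : ℤ => ((n * a i + b i : ℤ) : ℝ)).comp hlam)) fun i =>
    ⟨k + (C * |(a i : ℝ)| + |(b i : ℝ)|), fun x => ?_⟩
  have hline : |((lam x * a i + b i : ℤ) : ℝ)| ≤ C * |(a i : ℝ)| + |(b i : ℝ)| := by
    push_cast
    refine (abs_add_le _ _).trans ?_
    rw [abs_mul]
    gcongr
    exact hC x
  exact (abs_sub _ _).trans (add_le_add (abs_uk_le hk i) hline)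

end Profile

theorem stmt16 (k : ℕ) (hk : 2 ≤ k) :
    (∫ x in Set.Ioo (0 : ℝ) 3, distZ (uk k x)) ≤ 1 / k ∧
    ∀ (astar bstar : Fin 2 → ℤ) (lamstar : ℝ → ℤ), Measurable lamstar →
      (∃ Cb : ℝ, ∀ x, |(lamstar x : ℝ)| ≤ Cb) →
      1 / 2 ≤ ∫ x in Set.Ioo (0 : ℝ) 3,
        enorm' (fun i => uk k x i - ((lamstar x * astar i + bstar i : ℤ) : ℝ)) := by
  have hk₀ : k ≠ 0 := by omega
  refine ⟨?_, fun a b lam hlam ⟨C, hC⟩ => ?_⟩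
  · calc ∫ x in Ioo 0 3, distZ (uk k x)
        ≤ ∫ x in Ioo 0 3, (Ioc 1 2).indicator (fun _ => (k : ℝ)⁻¹) x :=
          integral_mono_of_nonneg (ae_of_all _ fun _ => distZ_nonneg _)
            ((integrableOn_const measure_Ioo_lt_top.ne).indicator measurableSet_Ioc)
            (ae_of_all _ (distZ_uk_le hk₀))
      _ = 1 / k := by
        rw [setIntegral_indicator measurableSet_Ioc,
          inter_eq_self_of_subset_right (Ioc_subset_Ioo (by norm_num) (by norm_num))]
        norm_num
  · have hs : volume (Ioo (0 : ℝ) 3) ≠ ⊤ := measure_Ioo_lt_top.ne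
    have hint := integrableOn_enorm'_uk_sub (by omega : 1 ≤ k) hs a b hlam hC
    rcases line_misses_zero_or_one_zero_or_k_one k a b with h | h | h
    · refine le_trans ?_ <| one_sub_mul_measureReal_le_setIntegral (I := Ioc 0 1) (ε := 0)
        hint measurableSet_Ioc (Ioc_subset_Ioo_right (by norm_num)) hs (fun x => h (lam x))
        fun x hx i => by simp [uk_of_le_one hx.2]
      norm_num
    · refine le_trans ?_ <| one_sub_mul_measureReal_le_setIntegral (I := Ioc 1 2) (ε := (k : ℝ)⁻¹)
        hint measurableSet_Ioc (Ioc_subset_Ioo (by norm_num) (by norm_num)) hs (fun x => h (lam x))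
        fun x hx i => by fin_cases i <;> simp [uk_of_mem_Ioc hx]
      have hk_inv : (k : ℝ)⁻¹ ≤ 2⁻¹ := inv_anti₀ two_pos (by exact_mod_cast hk)
      norm_num
      linarith
    · refine le_trans ?_ <| one_sub_mul_measureReal_le_setIntegral (I := Ioo 2 3) (ε := 0)
        hint measurableSet_Ioo (Ioo_subset_Ioo_left (by norm_num)) hs (fun x => h (lam x))
        fun x hx i => by fin_cases i <;> simp [uk_of_two_lt hk₀ hx.1]
      norm_num
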